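/- arXiv:2605.22728 — 2 statements merged into one kernel-verified Lean document; each statement's English description precedes it below -/
import Mathlib

section
/- For every dimension d ≥ 1 and all ε, γ > 0, the proximity map P_{γ,ε} : ℝ^d → ℝ^d is 1-Lipschitz continuous: for all s, t ∈ ℝ^d one has ‖P_{γ,ε}(t) − P_{γ,ε}(s)‖ ≤ ‖t − s‖. In particular, the Lipschitz constant is independent of the regularization parameter ε. -/
open Classical

/-- The proximity map of `γ` times the Huber-regularized Euclidean norm. -/
noncomputable def proxHuber {d : ℕ} (γ ε : ℝ) (t : EuclideanSpace ℝ (Fin d)) :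
    EuclideanSpace ℝ (Fin d) :=
  if t = 0 then 0 else (max (ε / (ε + γ)) (1 - γ / ‖t‖)) • t

/-!
`P_{γ,ε}` is radial: `P(t) = c(‖t‖) • t` with `0 ≤ c ≤ 1`, and its radial profile
`r ↦ c(r) r = max (ε r / (ε + γ)) (r - γ)` is a maximum of two `1`-Lipschitz functions.
Any such radial map is nonexpansive: expanding both squared distances,
`‖t - s‖² - ‖c t - c' s‖² = (‖t‖ - ‖s‖)² - (c ‖t‖ - c' ‖s‖)² + 2 (1 - c c') (‖t‖ ‖s‖ - ⟪t, s⟫)`,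
and both summands are nonnegative by the Lipschitz bound and Cauchy–Schwarz.
-/

theorem norm_smul_sub_smul_le_of_abs_sub_le {E : Type*} [NormedAddCommGroup E]
    [InnerProductSpace ℝ E] {x y : E} {c c' : ℝ} (hcc' : c * c' ≤ 1)
    (h : |c * ‖x‖ - c' * ‖y‖| ≤ |‖x‖ - ‖y‖|) : ‖c • x - c' • y‖ ≤ ‖x - y‖ := by
  have hsq : (c * ‖x‖ - c' * ‖y‖) ^ 2 ≤ (‖x‖ - ‖y‖) ^ 2 := sq_le_sq.2 h
  have hCS : inner ℝ x y ≤ ‖x‖ * ‖y‖ := real_inner_le_norm x y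
  refine (sq_le_sq₀ (norm_nonneg _) (norm_nonneg _)).1 ?_
  rw [norm_sub_sq_real, norm_sub_sq_real, norm_smul, norm_smul, real_inner_smul_left,
    real_inner_smul_right, Real.norm_eq_abs, Real.norm_eq_abs, mul_pow, mul_pow, sq_abs, sq_abs]
  nlinarith [mul_nonneg (sub_nonneg.2 hcc') (sub_nonneg.2 hCS)]

noncomputable def proxHuberFactor (γ ε r : ℝ) : ℝ :=
  max (ε / (ε + γ)) (1 - γ / r)

section proxHuberFactor

variable {γ ε : ℝ}

theorem proxHuberFactor_nonneg (hε : 0 ≤ ε) (hγ : 0 ≤ γ) (r : ℝ) :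
    0 ≤ proxHuberFactor γ ε r :=
  le_max_of_le_left (by positivity)

theorem proxHuberFactor_le_one (hε : 0 ≤ ε) (hγ : 0 ≤ γ) {r : ℝ} (hr : 0 ≤ r) :
    proxHuberFactor γ ε r ≤ 1 :=
  max_le (div_le_one_of_le₀ (by linarith) (by positivity))
    (sub_le_self _ (div_nonneg hγ hr))

theorem proxHuberFactor_mul_self (hγ : 0 ≤ γ) {r : ℝ} (hr : 0 ≤ r) :
    proxHuberFactor γ ε r * r = max (ε / (ε + γ) * r) (r - γ) := by
  rcases hr.eq_or_lt with rfl | hr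
  · simp [hγ]
  · rw [proxHuberFactor, max_mul_of_nonneg _ _ hr.le, sub_mul, div_mul_cancel₀ _ hr.ne', one_mul]

theorem abs_proxHuberFactor_mul_sub_le (hε : 0 ≤ ε) (hγ : 0 ≤ γ) {a b : ℝ} (ha : 0 ≤ a)
    (hb : 0 ≤ b) :
    |proxHuberFactor γ ε a * a - proxHuberFactor γ ε b * b| ≤ |a - b| := by
  rw [proxHuberFactor_mul_self hγ ha, proxHuberFactor_mul_self hγ hb]
  refine (abs_max_sub_max_le_max _ _ _ _).trans (max_le ?_ ?_)
  · have hκ : |ε / (ε + γ)| ≤ 1 := by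
      rw [abs_of_nonneg (by positivity)]
      exact div_le_one_of_le₀ (by linarith) (by positivity)
    rw [← mul_sub, abs_mul]
    exact mul_le_of_le_one_left (abs_nonneg _) hκ
  · rw [sub_sub_sub_cancel_right]

end proxHuberFactor

theorem proxHuber_eq_smul {d : ℕ} (γ ε : ℝ) (t : EuclideanSpace ℝ (Fin d)) :
    proxHuber γ ε t = proxHuberFactor γ ε ‖t‖ • t := by
  unfold proxHuber proxHuberFactor
  split_ifs with ht <;> simp [ht]

theorem proxHuber_one_lipschitz_general (d : ℕ) (ε γ : ℝ)
    (hε : 0 < ε) (hγ : 0 < γ) (s t : EuclideanSpace ℝ (Fin d)) :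
    ‖proxHuber γ ε t - proxHuber γ ε s‖ ≤ ‖t - s‖ := by
  rw [proxHuber_eq_smul, proxHuber_eq_smul]
  refine norm_smul_sub_smul_le_of_abs_sub_le ?_
    (abs_proxHuberFactor_mul_sub_le hε.le hγ.le (norm_nonneg t) (norm_nonneg s))
  exact mul_le_one₀ (proxHuberFactor_le_one hε.le hγ.le (norm_nonneg t))
    (proxHuberFactor_nonneg hε.le hγ.le _) (proxHuberFactor_le_one hε.le hγ.le (norm_nonneg s))

/-- The proximity map `P_{γ,ε}` is `1`-Lipschitz continuous, with Lipschitz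
constant independent of the regularization parameter `ε`. -/
theorem proxHuber_one_lipschitz (d : ℕ) (hd : 1 ≤ d) (ε γ : ℝ)
    (hε : 0 < ε) (hγ : 0 < γ) (s t : EuclideanSpace ℝ (Fin d)) :
    ‖proxHuber γ ε t - proxHuber γ ε s‖ ≤ ‖t - s‖ :=
  proxHuber_one_lipschitz_general d ε γ hε hγ s t
end

section
/- For every dimension d ≥ 1 and all ε, γ > 0, the proximity map P_{γ,ε} is Fréchet differentiable at every point t ∈ ℝ^d with ‖t‖ ≠ γ + ε, and its Fréchet derivative at such t is the linear map x ↦ J_{γ,ε}(t)·x. -/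
/-!
Off the sphere `‖t‖ = γ + ε` the maximum in `P_{γ,ε}` is attained by the same branch on a whole
neighbourhood of `t`. Inside, `P_{γ,ε}` is the linear map `s ↦ ε / (ε + γ) • s`; outside, it is
`s ↦ s - γ • (s / ‖s‖)`, and the normalisation `s ↦ s / ‖s‖` has derivative `‖t‖⁻¹` times the
orthogonal projection onto `tᗮ`, which is `J_{γ,ε}(t)` written without coordinates.
-/

open Classical RealInnerProductSpace

/-- The Newton derivative `J_{γ,ε}(t)` of the proximity map of the
Huber-regularized norm, as a map acting on vectors. -/
noncomputable def newtonProxHuber {d : ℕ} (γ ε : ℝ)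
    (t x : EuclideanSpace ℝ (Fin d)) : EuclideanSpace ℝ (Fin d) :=
  if γ + ε < ‖t‖ then x - (γ / ‖t‖) • (x - (⟪t, x⟫ / ‖t‖ ^ 2) • t)
  else (ε / (ε + γ)) • x

section InnerProductSpace

variable {E : Type*} [NormedAddCommGroup E] [InnerProductSpace ℝ E] {t : E}

theorem hasFDerivAt_norm_of_ne_zero (ht : t ≠ 0) :
    HasFDerivAt (‖·‖) (‖t‖⁻¹ • innerSL ℝ t) t := by
  have hsqrt := (hasStrictFDerivAt_norm_sq t).hasFDerivAt.sqrt (by simpa using ht)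
  simp only [Real.sqrt_sq (norm_nonneg _)] at hsqrt
  convert hsqrt using 1
  ext x
  simp only [smul_apply, coe_innerSL_apply, smul_eq_mul, one_div, mul_inv_rev,
    nsmul_eq_mul, Nat.cast_ofNat]
  ring

theorem hasFDerivAt_inv_norm_smul (ht : t ≠ 0) :
    HasFDerivAt (fun s : E => ‖s‖⁻¹ • s) (‖t‖⁻¹ • (ℝ ∙ t)ᗮ.starProjection) t := by
  have hnt : ‖t‖ ≠ 0 := norm_ne_zero_iff.mpr ht
  have hinv := (hasDerivAt_inv hnt).comp_hasFDerivAt t (hasFDerivAt_norm_of_ne_zero ht)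
  refine (hinv.smul (hasFDerivAt_id t)).congr_fderiv ?_
  ext x
  simp only [Function.comp_apply, neg_smul, id_eq, add_apply, smul_apply,
    ContinuousLinearMap.id_apply, ContinuousLinearMap.smulRight_apply, neg_apply, coe_innerSL_apply,
    smul_eq_mul, Submodule.starProjection_orthogonal', sub_apply, one_apply_eq_self,
    Submodule.starProjection_singleton, Real.ringHom_apply]
  match_scalars <;> field_simp

theorem hasFDerivAt_one_sub_div_norm_smul (γ : ℝ) (ht : t ≠ 0) :
    HasFDerivAt (fun s : E => (1 - γ / ‖s‖) • s)
      (ContinuousLinearMap.id ℝ E - (γ / ‖t‖) • (ℝ ∙ t)ᗮ.starProjection) t := by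
  have h := (hasFDerivAt_id t).sub ((hasFDerivAt_inv_norm_smul ht).const_smul γ)
  convert h using 1
  · ext s
    simp [sub_smul, smul_smul, div_eq_mul_inv]
  · simp [smul_smul, div_eq_mul_inv]

end InnerProductSpace

section proxHuber

variable {d : ℕ} {γ ε : ℝ} {s : EuclideanSpace ℝ (Fin d)}

theorem proxHuber_of_norm_le (hγ : 0 ≤ γ) (hs : ‖s‖ ≤ γ + ε) :
    proxHuber γ ε s = (ε / (ε + γ)) • s := by
  rcases eq_or_ne s 0 with rfl | hs0
  · simp [proxHuber]
  have hpos : 0 < ‖s‖ := norm_pos_iff.mpr hs0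
  have hle : γ / (ε + γ) ≤ γ / ‖s‖ := div_le_div_of_nonneg_left hγ hpos (by linarith)
  have hεγ : ε + γ ≠ 0 := by linarith
  rw [proxHuber, if_neg hs0, max_eq_left]
  rw [show ε / (ε + γ) = 1 - γ / (ε + γ) by field_simp; ring]
  linarith

theorem proxHuber_of_le_norm (hγ : 0 ≤ γ) (hγε : 0 < γ + ε) (hs : γ + ε ≤ ‖s‖) :
    proxHuber γ ε s = (1 - γ / ‖s‖) • s := by
  have hs0 : s ≠ 0 := norm_pos_iff.mp (hγε.trans_le hs)
  have hle : γ / ‖s‖ ≤ γ / (ε + γ) := div_le_div_of_nonneg_left hγ (by linarith) (by linarith)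
  have hεγ : ε + γ ≠ 0 := by linarith
  rw [proxHuber, if_neg hs0, max_eq_right]
  rw [show ε / (ε + γ) = 1 - γ / (ε + γ) by field_simp; ring]
  linarith

end proxHuber

theorem proxHuber_frechet_differentiable_general (d : ℕ) (ε γ : ℝ)
    (hε : 0 < ε) (hγ : 0 < γ) (t : EuclideanSpace ℝ (Fin d))
    (ht : ‖t‖ ≠ γ + ε) :
    ∃ L : EuclideanSpace ℝ (Fin d) →L[ℝ] EuclideanSpace ℝ (Fin d),
      (∀ x, L x = newtonProxHuber γ ε t x) ∧ HasFDerivAt (proxHuber γ ε) L t := by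
  rcases ht.lt_or_gt with hlt | hgt
  · refine ⟨(ε / (ε + γ)) • ContinuousLinearMap.id ℝ _, fun x => ?_, ?_⟩
    · simp [newtonProxHuber, hlt.not_gt]
    · refine ((hasFDerivAt_id t).const_smul _).congr_of_eventuallyEq ?_
      filter_upwards [continuous_norm.continuousAt.eventually_lt continuousAt_const hlt] with s hs
      exact proxHuber_of_norm_le hγ.le hs.le
  · have ht0 : t ≠ 0 := norm_pos_iff.mp (by linarith)
    refine ⟨_, fun x => ?_, (hasFDerivAt_one_sub_div_norm_smul γ ht0).congr_of_eventuallyEq ?_⟩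
    · simp [newtonProxHuber, hgt, Submodule.starProjection_orthogonal',
        Submodule.starProjection_singleton]
    · filter_upwards [continuousAt_const.eventually_lt continuous_norm.continuousAt hgt] with s hs
      exact proxHuber_of_le_norm hγ.le (by linarith) hs.le

/-- The proximity map `P_{γ,ε}` is Fréchet differentiable at every `t` with
`‖t‖ ≠ γ + ε`, with Fréchet derivative `x ↦ J_{γ,ε}(t) x`. -/
theorem proxHuber_frechet_differentiable (d : ℕ) (hd : 1 ≤ d) (ε γ : ℝ)
    (hε : 0 < ε) (hγ : 0 < γ) (t : EuclideanSpace ℝ (Fin d))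
    (ht : ‖t‖ ≠ γ + ε) :
    ∃ L : EuclideanSpace ℝ (Fin d) →L[ℝ] EuclideanSpace ℝ (Fin d),
      (∀ x, L x = newtonProxHuber γ ε t x) ∧ HasFDerivAt (proxHuber γ ε) L t :=
  proxHuber_frechet_differentiable_general d ε γ hε hγ t ht
end
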